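/- arXiv:math/0411429 — 5 statements merged into one kernel-verified Lean document; each statement's English description precedes it below -/
import Mathlib

section
/- Every twisted involution w ∈ I(θ) can be written as e·s̲₁·s̲₂⋯s̲ₖ for some s₁,…,sₖ ∈ S, where e is the identity element; i.e., the orbit of the identity under the twisted monoid action is exactly I(θ). -/
/-- `θ` maps simple reflections to simple reflections. -/
def PreservesSimples {B W : Type*} [Group W] {M : CoxeterMatrix B}
    (cs : CoxeterSystem M W) (θ : W ≃* W) : Prop :=
  ∀ i : B, ∃ j : B, θ (cs.simple i) = cs.simple j

open Classical in
/-- The twisted action `w · s̲`. -/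
noncomputable def twMul {B W : Type*} [Group W] {M : CoxeterMatrix B}
    (cs : CoxeterSystem M W) (θ : W ≃* W) (w : W) (i : B) : W :=
  if θ (cs.simple i) * w * cs.simple i = w then w * cs.simple i
  else θ (cs.simple i) * w * cs.simple i

/-- Action of a word of symbols. -/
noncomputable def twWord {B W : Type*} [Group W] {M : CoxeterMatrix B}
    (cs : CoxeterSystem M W) (θ : W ≃* W) (w : W) (l : List B) : W :=
  l.foldl (twMul cs θ) w

/-!
If `w ∈ I(θ)` is nontrivial and `s = s_i` is a right descent of `w`, then `θ(s)` is a left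
descent of `w = θ(w)⁻¹`, and the exchange property shows that either `θ(s) w s = w` or
`ℓ(θ(s) w s) < ℓ(θ(s) w) < ℓ(w)`. In both cases `w · s̲` lies in `I(θ)` and is shorter than `w`.
Since `v ↦ v · s̲` is an involution, `w = (w · s̲) · s̲`, and induction on the length writes `w`
as `e · s̲₁ ⋯ s̲ₖ`.

The exchange property is Tits' argument: the simple reflection `s` acts on `W × {±1}` by
`(x, ε) ↦ (s x s, ε)`, except that the sign flips at `x = s`. These permutations satisfy the
braid relations, so the parity of the number of occurrences of a reflection in the right
inversion sequence of a word depends only on the product of the word.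
-/

namespace CoxeterSystem

open List

open scoped Classical

theorem prod_map_alternatingWord_two_mul {B G : Type*} [Monoid G] (f : B → G) (i i' : B) (m : ℕ) :
    ((alternatingWord i i' (2 * m)).map f).prod = (f i * f i') ^ m := by
  induction m with
  | zero => simp [alternatingWord]
  | succ m ih =>
    rw [mul_add_one, alternatingWord_succ, alternatingWord_succ, concat_eq_append,
      concat_eq_append, map_append, map_append, prod_append, prod_append, ih, pow_succ]
    simp [mul_assoc]

variable {B W : Type*} [Group W] {M : CoxeterMatrix B} (cs : CoxeterSystem M W)

local prefix:100 "s " => cs.simple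
local prefix:100 "π " => cs.wordProd
local prefix:100 "ℓ " => cs.length
local prefix:100 "ris " => cs.rightInvSeq

theorem rightInvSeq_cons (i : B) (ω : List B) :
    ris (i :: ω) = (π ω)⁻¹ * s i * π ω :: ris ω := rfl

theorem rightInvSeq_alternatingWord (i i' : B) (n : ℕ) :
    ris (alternatingWord i i' n) = ((range n).map fun k ↦ (s i' * s i) ^ k * s i').reverse := by
  induction n generalizing i i' with
  | zero => rfl
  | succ n ih =>
    rw [alternatingWord_succ, rightInvSeq_concat, ih, range_succ_eq_map, map_cons, reverse_cons,
      concat_eq_append, pow_zero, one_mul, map_reverse, map_map, map_map]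
    congr 3
    funext k
    simp only [Function.comp_apply, MulAut.conj_apply, inv_simple, pow_succ', mul_assoc,
      ← mul_pow_mul]

theorem even_count_rightInvSeq_alternatingWord (i i' : B) (t : W) :
    Even ((ris (alternatingWord i i' (2 * M i i'))).count t) := by
  have periodic : ∀ k, (s i' * s i) ^ (M i i' + k) * s i' = (s i' * s i) ^ k * s i' := by
    simp [pow_add]
  rw [rightInvSeq_alternatingWord, count_reverse, two_mul, range_add, map_append, map_map]
  simp only [Function.comp_def, periodic, count_append]
  exact Even.add_self _

noncomputable def reflectionFlip (i : B) : Equiv.Perm (W × ℤˣ) :=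
  Function.Involutive.toPerm
    (fun p ↦ (MulAut.conj (s i) p.1, if p.1 = s i then -p.2 else p.2)) <| by
      rintro ⟨x, e⟩
      have hconj : MulAut.conj (s i) (MulAut.conj (s i) x) = x := by
        rw [← MulAut.mul_apply, ← map_mul, simple_mul_simple_self, map_one, MulAut.one_apply]
      have hfix : MulAut.conj (s i) x = s i ↔ x = s i := by
        rw [← (MulAut.conj (s i)).injective.eq_iff, hconj, MulAut.conj_apply, mul_inv_cancel_right]
      refine Prod.ext hconj ?_
      dsimp only
      rw [hfix]
      split_ifs <;> simp

theorem prod_map_reflectionFlip (ω : List B) (p : W × ℤˣ) :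
    (ω.map cs.reflectionFlip).prod p
      = (π ω * p.1 * (π ω)⁻¹, (-1) ^ (ris ω).count p.1 * p.2) := by
  induction ω with
  | nil => simp
  | cons i ω ih =>
    have hmem : π ω * p.1 * (π ω)⁻¹ = s i ↔ (π ω)⁻¹ * s i * π ω = p.1 := by
      constructor <;> intro h <;> rw [← h] <;> group
    rw [map_cons, prod_cons, Equiv.Perm.mul_apply, ih, rightInvSeq_cons, count_cons, wordProd_cons]
    simp only [reflectionFlip, Function.Involutive.coe_toPerm, MulAut.conj_apply, inv_simple,
      mul_inv_rev, hmem, beq_iff_eq]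
    refine Prod.ext (by group) ?_
    split_ifs <;> simp [pow_succ]

theorem isLiftable_reflectionFlip : M.IsLiftable cs.reflectionFlip := by
  intro i i'
  have hbraid : π (alternatingWord i i' (2 * M i i')) = 1 := by
    rw [prod_alternatingWord_eq_mul_pow]
    simp
  ext p <;>
  · rw [← prod_map_alternatingWord_two_mul, prod_map_reflectionFlip, hbraid,
      (even_count_rightInvSeq_alternatingWord cs i i' p.1).neg_one_pow]
    simp

theorem neg_one_pow_count_rightInvSeq_eq {ω ω' : List B} (h : π ω = π ω') (t : W) :
    (-1 : ℤˣ) ^ (ris ω).count t = (-1) ^ (ris ω').count t := by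
  let φ := cs.lift ⟨_, cs.isLiftable_reflectionFlip⟩
  have hφ (ω : List B) : φ (π ω) = (ω.map cs.reflectionFlip).prod := by
    rw [wordProd, map_list_prod, map_map]
    exact congrArg prod <| map_congr_left fun i _ ↦ cs.lift_apply_simple _ i
  have := congrArg (fun g ↦ (φ g (t, 1)).2) h
  simpa [hφ, prod_map_reflectionFlip] using this

theorem simple_mem_rightInvSeq {w : W} {i : B} (hi : cs.IsRightDescent w i) {ω : List B}
    (hω : π ω = w) : s i ∈ ris ω := by
  obtain ⟨ω', hω'red, hω'⟩ := cs.exists_isReduced (w * s i)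
  have hprod : π (ω'.concat i) = w := by
    rw [wordProd_concat, ← hω', simple_mul_simple_cancel_right]
  have hred : cs.IsReduced (ω'.concat i) := by
    have := cs.length_mul_simple w i
    rw [IsReduced, hprod, length_concat, ← hω'red.eq, ← hω']
    unfold IsRightDescent at hi
    omega
  have hcount : (ris (ω'.concat i)).count (s i) = 1 :=
    count_eq_one_of_mem hred.nodup_rightInvSeq <| by
      rw [rightInvSeq_concat, concat_eq_append]
      exact mem_concat_self ..
  have hparity := cs.neg_one_pow_count_rightInvSeq_eq (hω.trans hprod.symm) (s i)
  refine count_pos_iff.mp (Nat.pos_of_ne_zero fun h0 ↦ ?_)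
  rw [h0, hcount] at hparity
  simp at hparity

theorem simple_mul_mul_simple_eq_or_length_lt {w : W} {i : B} (hi : cs.IsRightDescent w i)
    (j : B) : s j * w * s i = w ∨ ℓ (s j * w * s i) < ℓ (s j * w) := by
  obtain ⟨ω, hωred, hω⟩ := cs.exists_isReduced (s j * w)
  have hprod : π (j :: ω) = w := by rw [wordProd_cons, ← hω, simple_mul_simple_cancel_left]
  have hmem := cs.simple_mem_rightInvSeq hi hprod
  rw [rightInvSeq_cons, mem_cons] at hmem
  rcases hmem with hhead | htail
  · left
    rw [hhead, ← hω, mul_inv_rev, inv_simple]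
    simp only [mul_assoc, mul_inv_cancel_left, simple_mul_simple_cancel_left]
  · right
    rw [hω]
    exact (cs.isRightInversion_of_mem_rightInvSeq hωred htail).2

end CoxeterSystem

section TwistedAction

variable {B W : Type*} [Group W] {M : CoxeterMatrix B} (cs : CoxeterSystem M W) (θ : W ≃* W)

local prefix:100 "s " => cs.simple
local prefix:100 "ℓ " => cs.length

variable {cs θ} in
theorem twMul_of_eq {w : W} {i : B} (h : θ (s i) * w * s i = w) : twMul cs θ w i = w * s i :=
  if_pos h

variable {cs θ} in
theorem twMul_of_ne {w : W} {i : B} (h : θ (s i) * w * s i ≠ w) :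
    twMul cs θ w i = θ (s i) * w * s i :=
  if_neg h

theorem twMul_twMul (w : W) (i : B) : twMul cs θ (twMul cs θ w i) i = w := by
  by_cases h : θ (s i) * w * s i = w
  · have h' : θ (s i) * (w * s i) * s i = w * s i := by rw [← mul_assoc, h]
    rw [twMul_of_eq h, twMul_of_eq h', cs.simple_mul_simple_cancel_right]
  · have h' : θ (s i) * (θ (s i) * w * s i) * s i = w := by
      rw [← mul_assoc, ← mul_assoc, ← map_mul, cs.simple_mul_simple_self, map_one, one_mul,
        cs.simple_mul_simple_cancel_right]
    rw [twMul_of_ne h, twMul_of_ne (h'.trans_ne (Ne.symm h)), h']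

theorem twWord_append_singleton (w : W) (l : List B) (i : B) :
    twWord cs θ w (l ++ [i]) = twMul cs θ (twWord cs θ w l) i :=
  List.foldl_concat ..

variable {θ}

theorem apply_twMul_eq_inv (hinv : ∀ w : W, θ (θ w) = w) {w : W} (hw : θ w = w⁻¹) (i : B) :
    θ (twMul cs θ w i) = (twMul cs θ w i)⁻¹ := by
  by_cases h : θ (s i) * w * s i = w
  · have hθ : θ (s i) = w * s i * w⁻¹ :=
      calc θ (s i) = θ (s i) * w * s i * s i * w⁻¹ := by simp [mul_assoc]
        _ = w * s i * w⁻¹ := by rw [h]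
    rw [twMul_of_eq h, map_mul, hw, hθ, mul_inv_rev, cs.inv_simple]
    group
  · have hθinv : (θ (s i))⁻¹ = θ (s i) := by rw [← map_inv, cs.inv_simple]
    rw [twMul_of_ne h, map_mul, map_mul, hw, hinv, mul_inv_rev, mul_inv_rev, cs.inv_simple,
      hθinv, mul_assoc]

theorem apply_twWord_eq_inv (hinv : ∀ w : W, θ (θ w) = w) {w : W} (hw : θ w = w⁻¹)
    (l : List B) : θ (twWord cs θ w l) = (twWord cs θ w l)⁻¹ := by
  induction l generalizing w with
  | nil => exact hw
  | cons i l ih => exact ih (apply_twMul_eq_inv cs hinv hw i)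

variable {cs}

theorem PreservesSimples.length_apply_le (hS : PreservesSimples cs θ) (w : W) :
    ℓ (θ w) ≤ ℓ w := by
  choose σ hσ using hS
  obtain ⟨ω, hω, rfl⟩ := cs.exists_isReduced w
  have hθω : θ (cs.wordProd ω) = cs.wordProd (ω.map σ) := by
    simp [CoxeterSystem.wordProd, map_list_prod, List.map_map, Function.comp_def, hσ]
  calc ℓ (θ (cs.wordProd ω)) ≤ (ω.map σ).length := hθω ▸ cs.length_wordProd_le _
    _ = ℓ (cs.wordProd ω) := by rw [List.length_map, hω.eq]

theorem PreservesSimples.length_apply (hS : PreservesSimples cs θ)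
    (hinv : ∀ w : W, θ (θ w) = w) (w : W) : ℓ (θ w) = ℓ w :=
  le_antisymm (hS.length_apply_le w) (by simpa [hinv] using hS.length_apply_le (θ w))

variable (cs)

theorem length_twMul_lt (hinv : ∀ w : W, θ (θ w) = w) (hS : PreservesSimples cs θ) {w : W}
    (hw : θ w = w⁻¹) {i : B} (hi : cs.IsRightDescent w i) : ℓ (twMul cs θ w i) < ℓ w := by
  obtain ⟨j, hj⟩ := hS i
  by_cases h : θ (s i) * w * s i = w
  · rw [twMul_of_eq h]
    exact hi
  · have hleft : ℓ (s j * w) < ℓ w := by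
      have : s j * w = θ ((w * s i)⁻¹) := by
        rw [mul_inv_rev, cs.inv_simple, map_mul, hj, map_inv, hw, inv_inv]
      rw [this, hS.length_apply hinv, cs.length_inv]
      exact hi
    rw [twMul_of_ne h]
    rw [hj] at h ⊢
    have := (cs.simple_mul_mul_simple_eq_or_length_lt hi j).resolve_left h
    omega

theorem exists_twWord_one_eq (hinv : ∀ w : W, θ (θ w) = w) (hS : PreservesSimples cs θ)
    {w : W} (hw : θ w = w⁻¹) : ∃ l : List B, twWord cs θ 1 l = w := by
  induction hn : ℓ w using Nat.strong_induction_on generalizing w with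
  | _ n ih =>
  rcases eq_or_ne w 1 with rfl | hw1
  · exact ⟨[], rfl⟩
  obtain ⟨i, hi⟩ := cs.exists_rightDescent_of_ne_one hw1
  obtain ⟨l, hl⟩ := ih _ (hn ▸ length_twMul_lt cs hinv hS hw hi)
    (apply_twMul_eq_inv cs hinv hw i) rfl
  exact ⟨l ++ [i], by rw [twWord_append_singleton, hl, twMul_twMul]⟩

end TwistedAction

/-- The orbit of the identity under the twisted monoid action is exactly the
set of twisted involutions `I(θ)`. -/
theorem stmt_3 {B W : Type*} [Group W] {M : CoxeterMatrix B}
    (cs : CoxeterSystem M W) (θ : W ≃* W)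
    (hinv : ∀ w : W, θ (θ w) = w) (hS : PreservesSimples cs θ) :
    {w : W | ∃ l : List B, twWord cs θ 1 l = w} = {w : W | θ w = w⁻¹} := by
  ext w
  constructor
  · rintro ⟨l, rfl⟩
    exact apply_twWord_eq_inv cs hinv (by simp) l
  · exact exists_twWord_one_eq cs hinv hS
end

section
/- Let w ∈ I(θ) and s ∈ S. If ℓ(θ(s)ws) = ℓ(w), then θ(s)ws = w. -/
namespace StrongExchangeAux

open CoxeterSystem List

attribute [local instance] Classical.decEq

variable {B W : Type*} [Group W] {M : CoxeterMatrix B} (cs : CoxeterSystem M W)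

/-- The sign-cocycle involution attached to a simple reflection. -/
noncomputable def etaFun (i : B) : W × ℤˣ → W × ℤˣ :=
  fun p => (cs.simple i * p.1 * cs.simple i, if p.1 = cs.simple i then -p.2 else p.2)

theorem simple_conj_eq_simple_iff (i : B) (t : W) :
    (cs.simple i * t * cs.simple i = cs.simple i) ↔ (t = cs.simple i) := by
  constructor
  · intro h
    have h' : cs.simple i * t = 1 := by
      apply mul_right_cancel (b := cs.simple i)
      rw [one_mul]; exact h
    calc t = (cs.simple i)⁻¹ * (cs.simple i * t) := by group
      _ = (cs.simple i)⁻¹ := by rw [h', mul_one]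
      _ = cs.simple i := cs.inv_simple i
  · intro h
    rw [h, cs.simple_mul_simple_self, one_mul]

theorem etaFun_involutive (i : B) : Function.Involutive (etaFun cs i) := by
  rintro ⟨t, ε⟩
  simp only [etaFun]
  have h1 : cs.simple i * (cs.simple i * t * cs.simple i) * cs.simple i = t := by
    calc cs.simple i * (cs.simple i * t * cs.simple i) * cs.simple i
        = (cs.simple i * cs.simple i) * t * (cs.simple i * cs.simple i) := by group
      _ = t := by rw [cs.simple_mul_simple_self]; group
  by_cases ht : t = cs.simple i
  · simp [ht, simple_conj_eq_simple_iff, h1]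
  · have h2 : ¬(cs.simple i * t * cs.simple i = cs.simple i) := fun hh =>
      ht ((simple_conj_eq_simple_iff cs i t).mp hh)
    simp [ht, h2, h1]

/-- The sign-cocycle permutation. -/
noncomputable def eta (i : B) : Equiv.Perm (W × ℤˣ) := (etaFun_involutive cs i).toPerm

theorem eta_apply (i : B) (t : W) (ε : ℤˣ) :
    eta cs i (t, ε) = (cs.simple i * t * cs.simple i, if t = cs.simple i then -ε else ε) := rfl

theorem rightInvSeq_cons (i : B) (ω : List B) :
    cs.rightInvSeq (i :: ω) =
      (cs.wordProd ω)⁻¹ * cs.simple i * cs.wordProd ω :: cs.rightInvSeq ω := rfl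

theorem prod_eta_apply (ω : List B) (t : W) (ε : ℤˣ) :
    ((ω.map (eta cs)).prod) (t, ε) =
      (cs.wordProd ω * t * (cs.wordProd ω)⁻¹,
        ε * (-1) ^ ((cs.rightInvSeq ω).count t)) := by
  induction ω generalizing t ε with
  | nil => simp
  | cons i ω ih =>
    rw [List.map_cons, List.prod_cons, Equiv.Perm.mul_apply, ih, eta_apply,
      cs.wordProd_cons]
    have comp1 : cs.simple i * (cs.wordProd ω * t * (cs.wordProd ω)⁻¹) * cs.simple i
        = (cs.simple i * cs.wordProd ω) * t * ((cs.simple i) * cs.wordProd ω)⁻¹ := by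
      rw [mul_inv_rev, cs.inv_simple]; group
    by_cases hc : (cs.wordProd ω)⁻¹ * cs.simple i * cs.wordProd ω = t
    · have hc' : cs.wordProd ω * t * (cs.wordProd ω)⁻¹ = cs.simple i := by
        rw [← hc]; group
      have hcount : ((cs.rightInvSeq (i :: ω)).count t) = (cs.rightInvSeq ω).count t + 1 := by
        simp [rightInvSeq_cons, List.count_cons, hc]
      rw [if_pos hc', hcount, Prod.mk.injEq]
      exact ⟨comp1, by rw [pow_succ, mul_neg_one, mul_neg]⟩
    · have hc' : ¬(cs.wordProd ω * t * (cs.wordProd ω)⁻¹ = cs.simple i) := by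
        intro h; apply hc; rw [← h]; group
      have hcount : ((cs.rightInvSeq (i :: ω)).count t) = (cs.rightInvSeq ω).count t := by
        simp [rightInvSeq_cons, List.count_cons, hc]
      rw [if_neg hc', hcount, Prod.mk.injEq]
      exact ⟨comp1, rfl⟩

theorem ris_alternatingWord (i j : B) (n : ℕ) :
    cs.rightInvSeq (alternatingWord i j n) =
      ((List.range n).reverse).map
        (fun k => (cs.simple j * cs.simple i) ^ k * cs.simple j) := by
  induction n with
  | zero => simp [alternatingWord]
  | succ n ih =>
    rw [alternatingWord_succ', rightInvSeq_cons, ih, List.range_succ, List.reverse_append]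
    simp only [List.reverse_cons, List.reverse_nil, List.nil_append, List.map_cons,
      List.cons_append, List.singleton_append]
    congr 1
    -- head computation
    have hshuffle : ∀ r : ℕ, cs.simple j * (cs.simple i * cs.simple j) ^ r
        = (cs.simple j * cs.simple i) ^ r * cs.simple j := by
      intro r
      have : SemiconjBy (cs.simple j) (cs.simple i * cs.simple j)
          (cs.simple j * cs.simple i) := by
        unfold SemiconjBy; group
      exact this.pow_right r
    have hinvpow : ∀ r : ℕ, ((cs.simple i * cs.simple j) ^ r)⁻¹
        = (cs.simple j * cs.simple i) ^ r := by
      intro r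
      rw [← inv_pow]
      congr 1
      rw [mul_inv_rev, cs.inv_simple, cs.inv_simple]
    rw [cs.prod_alternatingWord_eq_mul_pow]
    by_cases hn : Even n
    · obtain ⟨r, hr⟩ := hn
      have hr' : n = 2 * r := by omega
      have hdiv : n / 2 = r := by omega
      rw [if_pos ⟨r, hr⟩, if_pos ⟨r, hr⟩, hdiv, one_mul, hinvpow]
      rw [hr', mul_assoc, hshuffle, ← mul_assoc, ← pow_add]
      congr 2
      omega
    · have hodd : Odd n := Nat.odd_iff.mpr (Nat.not_even_iff.mp hn)
      obtain ⟨r, hr⟩ := hodd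
      have hdiv : n / 2 = r := by omega
      rw [if_neg hn, if_neg hn, hdiv]
      rw [mul_inv_rev, hinvpow, cs.inv_simple]
      calc (cs.simple j * cs.simple i) ^ r * cs.simple j * cs.simple i *
            (cs.simple j * (cs.simple i * cs.simple j) ^ r)
          = (cs.simple j * cs.simple i) ^ r * (cs.simple j * cs.simple i) *
            (cs.simple j * (cs.simple i * cs.simple j) ^ r) := by group
        _ = (cs.simple j * cs.simple i) ^ (r + 1) *
            ((cs.simple j * cs.simple i) ^ r * cs.simple j) := by
              rw [pow_succ, hshuffle]
        _ = (cs.simple j * cs.simple i) ^ (r + 1 + r) * cs.simple j := by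
              rw [← mul_assoc, ← pow_add]
        _ = (cs.simple j * cs.simple i) ^ n * cs.simple j := by
              congr 2; omega

theorem count_ris_braid_even (i j : B) (t : W) :
    Even ((cs.rightInvSeq (alternatingWord i j (2 * M i j))).count t) := by
  rw [ris_alternatingWord]
  set u : ℕ → W := fun k => (cs.simple j * cs.simple i) ^ k * cs.simple j with hu
  have hpm : (cs.simple j * cs.simple i) ^ M i j = 1 := cs.simple_mul_simple_pow' i j
  rw [List.map_reverse, List.count_reverse]
  have : 2 * M i j = M i j + M i j := by omega
  rw [this, List.range_add, List.map_append, List.count_append]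
  have hmap : (List.map (M i j + ·) (List.range (M i j))).map u
      = (List.range (M i j)).map u := by
    rw [List.map_map]
    apply List.map_congr_left
    intro k _
    simp only [Function.comp_apply, hu, pow_add, hpm, one_mul]
  rw [hmap]
  exact ⟨_, rfl⟩

theorem eta_liftable : M.IsLiftable (eta cs) := by
  intro i j
  have key : ∀ m : ℕ, (eta cs i * eta cs j) ^ m
      = ((alternatingWord i j (2 * m)).map (eta cs)).prod := by
    intro m
    induction m with
    | zero => simp [alternatingWord]
    | succ m ih =>
      have halt : alternatingWord i j (2 * (m + 1)) =
          i :: j :: alternatingWord i j (2 * m) := by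
        have h1 : 2 * (m + 1) = (2 * m + 1) + 1 := by omega
        rw [h1, alternatingWord_succ', alternatingWord_succ']
        rw [if_neg (by simp [Nat.even_add_one, Nat.not_even_iff_odd, parity_simps]),
          if_pos (by exact even_two_mul m)]
      rw [halt, List.map_cons, List.map_cons, List.prod_cons, List.prod_cons, ← ih,
        pow_succ']
      rw [mul_assoc]
  have hprod : cs.wordProd (alternatingWord i j (2 * M i j)) = 1 := by
    rw [cs.prod_alternatingWord_eq_mul_pow, if_pos (even_two_mul _)]
    have : 2 * M i j / 2 = M i j := by omega
    rw [this, one_mul, cs.simple_mul_simple_pow]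
  rw [key]
  apply Equiv.ext
  rintro ⟨t, ε⟩
  rw [prod_eta_apply, hprod, (count_ris_braid_even cs i j t).neg_one_pow]
  simp

/-- The lifted sign-cocycle homomorphism. -/
noncomputable def Phi : W →* Equiv.Perm (W × ℤˣ) := cs.lift ⟨eta cs, eta_liftable cs⟩

theorem Phi_wordProd (ω : List B) : Phi cs (cs.wordProd ω) = (ω.map (eta cs)).prod := by
  unfold CoxeterSystem.wordProd
  rw [MonoidHom.map_list_prod, List.map_map]
  congr 1
  apply List.map_congr_left
  intro k _
  exact cs.lift_apply_simple (eta_liftable cs) k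

theorem count_parity (ω ω' : List B) (hp : cs.wordProd ω = cs.wordProd ω') (t : W) :
    ((-1 : ℤˣ)) ^ ((cs.rightInvSeq ω).count t)
      = (-1) ^ ((cs.rightInvSeq ω').count t) := by
  have h1 : ((ω.map (eta cs)).prod) = ((ω'.map (eta cs)).prod) := by
    rw [← Phi_wordProd, ← Phi_wordProd, hp]
  have h2 := congrArg (fun f : Equiv.Perm (W × ℤˣ) => (f (t, 1)).2) h1
  simp only [prod_eta_apply] at h2
  simpa using h2

theorem simple_mem_ris {ω : List B} (hr : cs.IsReduced ω) {i : B}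
    (hd : cs.length (cs.wordProd ω * cs.simple i) < cs.length (cs.wordProd ω)) :
    cs.simple i ∈ cs.rightInvSeq ω := by
  obtain ⟨ω', hlen, hprod⟩ := cs.exists_reduced_word (cs.wordProd ω * cs.simple i)
  have hred' : cs.IsReduced ω' := by
    show cs.length (cs.wordProd ω') = ω'.length
    exact hlen
  have hprod'' : cs.wordProd (ω'.concat i) = cs.wordProd ω := by
    rw [cs.wordProd_concat, ← hprod, cs.simple_mul_simple_cancel_right]
  have hnotmem : cs.simple i ∉ cs.rightInvSeq ω' := by
    intro hmem
    have hri := cs.isRightInversion_of_mem_rightInvSeq hred' hmem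
    have := hri.2
    rw [← hprod, cs.simple_mul_simple_cancel_right] at this
    omega
  have hcount' : (cs.rightInvSeq ω').count (cs.simple i) = 0 :=
    List.count_eq_zero_of_not_mem hnotmem
  have hnotmem2 : cs.simple i ∉
      (cs.rightInvSeq ω').map (MulAut.conj (cs.simple i)) := by
    intro hmem
    obtain ⟨x, hx, hconj⟩ := List.mem_map.mp hmem
    have : x = cs.simple i := by
      have h1 : cs.simple i * x * (cs.simple i)⁻¹ = cs.simple i := hconj
      calc x = (cs.simple i)⁻¹ * (cs.simple i * x * (cs.simple i)⁻¹) * cs.simple i := by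
            group
        _ = (cs.simple i)⁻¹ * cs.simple i * cs.simple i := by rw [h1]
        _ = cs.simple i := by group
    exact hnotmem (this ▸ hx)
  have hcount'' : (cs.rightInvSeq (ω'.concat i)).count (cs.simple i) = 1 := by
    rw [cs.rightInvSeq_concat, List.concat_eq_append, List.count_append]
    rw [List.count_eq_zero_of_not_mem hnotmem2]
    simp
  have hpar := count_parity cs ω (ω'.concat i) hprod''.symm (cs.simple i)
  rw [hcount''] at hpar
  by_contra hnmem
  rw [List.count_eq_zero_of_not_mem hnmem] at hpar
  simp at hpar

theorem right_exchange {ω : List B} (hr : cs.IsReduced ω) {i : B}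
    (hd : cs.length (cs.wordProd ω * cs.simple i) < cs.length (cs.wordProd ω)) :
    ∃ j < ω.length, cs.wordProd ω * cs.simple i = cs.wordProd (ω.eraseIdx j) := by
  have hmem := simple_mem_ris cs hr hd
  obtain ⟨j, hj, hget⟩ := List.getElem_of_mem hmem
  have hj' : j < ω.length := by
    rwa [cs.length_rightInvSeq] at hj
  refine ⟨j, hj', ?_⟩
  have := cs.wordProd_mul_getD_rightInvSeq ω j
  rwa [List.getD_eq_getElem _ _ hj, hget] at this

theorem length_theta (θ : W ≃* W) (hinv : ∀ w : W, θ (θ w) = w)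
    (hS : PreservesSimples cs θ) (x : W) : cs.length (θ x) = cs.length x := by
  choose f hf using hS
  have hword : ∀ ω : List B, θ (cs.wordProd ω) = cs.wordProd (ω.map f) := by
    intro ω
    induction ω with
    | nil => simp
    | cons k ω ih => rw [cs.wordProd_cons, map_mul, ih, List.map_cons, cs.wordProd_cons, hf]
  have hle : ∀ y : W, cs.length (θ y) ≤ cs.length y := by
    intro y
    obtain ⟨ω, hlen, hy⟩ := cs.exists_reduced_word y
    rw [hy, hword]
    calc cs.length (cs.wordProd (ω.map f)) ≤ (ω.map f).length := cs.length_wordProd_le _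
      _ = ω.length := List.length_map _
      _ = cs.length y := by rw [hy, hlen]
      _ = cs.length (cs.wordProd ω) := by rw [hy]
  refine le_antisymm (hle x) ?_
  calc cs.length x = cs.length (θ (θ x)) := by rw [hinv]
    _ ≤ cs.length (θ x) := hle (θ x)

end StrongExchangeAux

/-- Key step in Lemma 3.2: for a twisted involution `w`, if
`ℓ(θ(s) w s) = ℓ(w)` then `θ(s) w s = w`. -/
theorem stmt_5 {B W : Type*} [Group W] {M : CoxeterMatrix B}
    (cs : CoxeterSystem M W) (θ : W ≃* W)
    (hinv : ∀ w : W, θ (θ w) = w) (hS : PreservesSimples cs θ)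
    (w : W) (hw : θ w = w⁻¹) (i : B)
    (h : cs.length (θ (cs.simple i) * w * cs.simple i) = cs.length w) :
    θ (cs.simple i) * w * cs.simple i = w := by
  obtain ⟨k, hk⟩ := hS i
  rw [hk] at h ⊢
  have hθs : θ (cs.simple k) = cs.simple i := by
    have := hinv (cs.simple i); rwa [hk] at this
  have hlθ := StrongExchangeAux.length_theta cs θ hinv hS
  have hswinv : cs.simple i * w⁻¹ = (w * cs.simple i)⁻¹ := by
    rw [mul_inv_rev, cs.inv_simple]
  have hlsw : cs.length (cs.simple k * w) = cs.length (w * cs.simple i) := by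
    have hθkw : θ (cs.simple k * w) = (w * cs.simple i)⁻¹ := by
      rw [map_mul, hθs, hw, hswinv]
    calc cs.length (cs.simple k * w) = cs.length (θ (cs.simple k * w)) := (hlθ _).symm
      _ = cs.length ((w * cs.simple i)⁻¹) := by rw [hθkw]
      _ = cs.length (w * cs.simple i) := cs.length_inv _
  rcases cs.length_mul_simple w i with h1 | h1
  · -- ascending case: ℓ(w sᵢ) = ℓ(w) + 1
    obtain ⟨ω, hred, hπ⟩ := cs.exists_reduced_word' w
    have hωlen : ω.length = cs.length w := by
      have := hred; rw [CoxeterSystem.IsReduced, ← hπ] at this; omega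
    have hπ₁ : cs.wordProd (i :: ω.reverse) = cs.simple i * w⁻¹ := by
      rw [cs.wordProd_cons, cs.wordProd_reverse, ← hπ]
    have hred₁ : cs.IsReduced (i :: ω.reverse) := by
      show cs.length (cs.wordProd (i :: ω.reverse)) = (i :: ω.reverse).length
      rw [hπ₁, hswinv, cs.length_inv]
      simp only [List.length_cons, List.length_reverse]
      omega
    have hinv2 : cs.wordProd (i :: ω.reverse) * cs.simple k
        = (cs.simple k * w * cs.simple i)⁻¹ := by
      rw [hπ₁, mul_inv_rev, mul_inv_rev, cs.inv_simple, cs.inv_simple]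
      group
    have hd : cs.length (cs.wordProd (i :: ω.reverse) * cs.simple k)
        < cs.length (cs.wordProd (i :: ω.reverse)) := by
      rw [hinv2, cs.length_inv, h, hπ₁, hswinv, cs.length_inv]
      omega
    obtain ⟨j, hj, heq⟩ := StrongExchangeAux.right_exchange cs hred₁ hd
    match j with
    | 0 =>
      rw [List.eraseIdx_cons_zero, cs.wordProd_reverse, ← hπ, hinv2] at heq
      calc cs.simple k * w * cs.simple i
          = ((cs.simple k * w * cs.simple i)⁻¹)⁻¹ := by rw [inv_inv]
        _ = (w⁻¹)⁻¹ := by rw [heq]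
        _ = w := inv_inv w
    | j + 1 =>
      exfalso
      rw [hπ₁, List.eraseIdx_cons_succ, cs.wordProd_cons] at heq
      have heq' : w⁻¹ * cs.simple k = cs.wordProd ((ω.reverse).eraseIdx j) := by
        apply mul_left_cancel (a := cs.simple i)
        rw [← mul_assoc]
        exact heq
      have hlen1 : cs.length (w⁻¹ * cs.simple k) = cs.length w + 1 := by
        have : (w⁻¹ * cs.simple k)⁻¹ = cs.simple k * w := by
          rw [mul_inv_rev, cs.inv_simple, inv_inv]
        rw [← cs.length_inv, this, hlsw]
        omega
      have hj' : j < (ω.reverse).length := by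
        simp only [List.length_reverse]
        simp only [List.length_cons, List.length_reverse] at hj
        omega
      have hle : cs.length (cs.wordProd ((ω.reverse).eraseIdx j))
          ≤ ((ω.reverse).eraseIdx j).length := cs.length_wordProd_le _
      have hlen2 : ((ω.reverse).eraseIdx j).length + 1 = (ω.reverse).length :=
        List.length_eraseIdx_add_one hj'
      rw [← heq'] at hle
      simp only [List.length_reverse] at hlen2
      omega
  · -- descending case: ℓ(w sᵢ) + 1 = ℓ(w)
    obtain ⟨ω', hlen', hprod'⟩ := cs.exists_reduced_word (cs.simple k * w)
    have hπω : cs.wordProd (k :: ω') = w := by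
      rw [cs.wordProd_cons, ← hprod', cs.simple_mul_simple_cancel_left]
    have hredω : cs.IsReduced (k :: ω') := by
      show cs.length (cs.wordProd (k :: ω')) = (k :: ω').length
      rw [hπω]
      simp only [List.length_cons]
      rw [← (hlen' : cs.length (cs.wordProd ω') = ω'.length), ← hprod', hlsw]
      omega
    have hd : cs.length (cs.wordProd (k :: ω') * cs.simple i)
        < cs.length (cs.wordProd (k :: ω')) := by
      rw [hπω]; omega
    obtain ⟨j, hj, heq⟩ := StrongExchangeAux.right_exchange cs hredω hd
    match j with
    | 0 =>
      rw [List.eraseIdx_cons_zero, ← hprod', hπω] at heq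
      calc cs.simple k * w * cs.simple i
          = cs.simple k * (w * cs.simple i) := by rw [mul_assoc]
        _ = cs.simple k * (cs.simple k * w) := by rw [heq]
        _ = w := cs.simple_mul_simple_cancel_left k
    | j + 1 =>
      exfalso
      rw [hπω, List.eraseIdx_cons_succ, cs.wordProd_cons] at heq
      have heq' : cs.simple k * w * cs.simple i = cs.wordProd (ω'.eraseIdx j) := by
        calc cs.simple k * w * cs.simple i
            = cs.simple k * (w * cs.simple i) := by rw [mul_assoc]
          _ = cs.simple k * (cs.simple k * cs.wordProd (ω'.eraseIdx j)) := by rw [heq]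
          _ = cs.wordProd (ω'.eraseIdx j) := cs.simple_mul_simple_cancel_left k
      have hj' : j < ω'.length := by
        simp only [List.length_cons] at hj
        omega
      have hle : cs.length (cs.wordProd (ω'.eraseIdx j)) ≤ (ω'.eraseIdx j).length :=
        cs.length_wordProd_le _
      have hlen2 : (ω'.eraseIdx j).length + 1 = ω'.length :=
        List.length_eraseIdx_add_one hj'
      rw [← heq', h] at hle
      have hlen'' : cs.length (cs.wordProd ω') = ω'.length := hlen'
      rw [← hprod', hlsw] at hlen''
      omega
end

section
/- (Lifting property for twisted involutions) Let v, w ∈ I(θ) with v ≤ w in Bruhat order, and suppose s ∈ S is a right descent of w. Then (i) v·s̲ ≤ w, and (ii) if s is also a right descent of v, then v·s̲ ≤ w·s̲. -/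
/-- The Bruhat order on a Coxeter group: `v ≤ w` iff `w = v t₁ ⋯ tₖ` for
reflections `t₁, …, tₖ` with the lengths strictly increasing at each step. -/
def bruhatLE {B W : Type*} [Group W] {M : CoxeterMatrix B}
    (cs : CoxeterSystem M W) (v w : W) : Prop :=
  ∃ l : List W, (∀ t ∈ l, cs.IsReflection t) ∧ l.foldl (· * ·) v = w ∧
    ∀ k < l.length,
      cs.length ((l.take k).foldl (· * ·) v) <
        cs.length ((l.take (k + 1)).foldl (· * ·) v)

/-!
Bruhat order is generated by steps `v → v t` (`t` a reflection, length increasing). The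
key fact is that right multiplication by a simple reflection `s` turns a step `v → w` either
into the equality `v s = w` or into a step `v s → w s`. This needs the strong exchange
property, proved with Tits' representation of `W` on `W × ZMod 2`: the parity of the number
of occurrences of `t` in the inversion sequence of a word depends only on the product of the
word. Induction along chains then gives the usual lifting properties, and inversion gives
their left-handed versions.

If `θ (s_i) = s_j` and `θ u = u⁻¹`, then `ℓ (s_j u) = ℓ (u s_i)`, so a right descent `s_i` of
`u` comes with the left descent `s_j`. Then `u · s̲` is either `u s_i` (when `s_j u s_i = u`)
or `s_j (u s_i) < u s_i`, and each of the resulting cases for `v` and `w` is one of the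
lifting properties.
-/

namespace CoxeterSystem

variable {B W : Type*} [Group W] {M : CoxeterMatrix B} (cs : CoxeterSystem M W)

local prefix:100 "s " => cs.simple
local prefix:100 "π " => cs.wordProd
local prefix:100 "ℓ " => cs.length
local prefix:100 "ris " => cs.rightInvSeq

open List

section ReflectionRepresentation

open scoped Classical

private theorem mul_mul_inv_eq_iff {G : Type*} [Group G] (a t u : G) :
    a * t * a⁻¹ = u ↔ t = a⁻¹ * u * a := by
  constructor <;> rintro rfl <;> group

private theorem simple_mul_mul_simple_eq_iff (i : B) (t u : W) :
    s i * t * s i = u ↔ t = s i * u * s i := by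
  simpa only [inv_simple] using mul_mul_inv_eq_iff (s i) t u

/-- The action of `s i` in Tits' permutation representation on `T × {±1}` (Björner–Brenti,
Thm. 1.4.3), extended to `W × ZMod 2` so that nothing has to be restricted to reflections. -/
noncomputable def simplePerm (i : B) : Equiv.Perm (W × ZMod 2) :=
  Function.Involutive.toPerm (fun x => (s i * x.1 * s i, x.2 + if x.1 = s i then 1 else 0))
    fun ⟨t, e⟩ => by
      ext
      · simp [mul_assoc, cs.simple_mul_simple_cancel_left]
      · simp only [simple_mul_mul_simple_eq_iff, cs.simple_mul_simple_cancel_right, add_assoc]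
        split_ifs <;> decide +revert

theorem simplePerm_apply (i : B) (t : W) (e : ZMod 2) :
    simplePerm cs i (t, e) = (s i * t * s i, e + if t = s i then 1 else 0) := rfl

theorem simplePerm_mul_simplePerm_pow_apply (i j : B) (k : ℕ) (t : W) (e : ZMod 2) :
    ((simplePerm cs i * simplePerm cs j) ^ k) (t, e) =
      ((s i * s j) ^ k * t * ((s i * s j) ^ k)⁻¹,
        e + ∑ n ∈ Finset.range (2 * k), if t = s j * (s i * s j) ^ n then 1 else 0) := by
  set q := s i * s j
  have hq : ∀ n : ℕ, (q ^ n)⁻¹ * s j = s j * q ^ n := fun n => by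
    have : s j * q ^ n * (s j)⁻¹ = (q ^ n)⁻¹ := by
      rw [← conj_pow, cs.inv_simple, ← inv_pow]
      simp [q, mul_assoc, cs.simple_mul_simple_self]
    rw [← this, cs.inv_simple, mul_assoc, cs.simple_mul_simple_self, mul_one]
  induction k with
  | zero => simp
  | succ k ih =>
    have h₁ : q ^ k * t * (q ^ k)⁻¹ = s j ↔ t = s j * q ^ (2 * k) := by
      rw [mul_mul_inv_eq_iff, hq, mul_assoc, ← pow_add, two_mul]
    have h₂ : s j * (q ^ k * t * (q ^ k)⁻¹) * s j = s i ↔ t = s j * q ^ (2 * k + 1) := by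
      have : (q ^ k)⁻¹ * (s j * s i * s j) * q ^ k = s j * q ^ (2 * k + 1) :=
        calc (q ^ k)⁻¹ * (s j * s i * s j) * q ^ k = (q ^ k)⁻¹ * s j * (q * q ^ k) := by
              simp only [q, mul_assoc]
          _ = s j * q ^ (2 * k + 1) := by rw [hq, ← pow_succ', mul_assoc, ← pow_add]; ring_nf
      rw [simple_mul_mul_simple_eq_iff, mul_mul_inv_eq_iff, this]
    rw [pow_succ', Equiv.Perm.mul_apply, ih, Equiv.Perm.mul_apply, simplePerm_apply,
      simplePerm_apply, h₂, h₁, Nat.mul_succ, Finset.sum_range_succ, Finset.sum_range_succ]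
    ext
    · simp only [q, pow_succ', mul_inv_rev, inv_simple]
      group
    · simp only [add_assoc]

theorem isLiftable_simplePerm : M.IsLiftable (simplePerm cs) := fun i j => by
  ext ⟨t, e⟩ : 1
  rw [simplePerm_mul_simplePerm_pow_apply, simple_mul_simple_pow, two_mul, Finset.sum_range_add]
  simp only [pow_add, simple_mul_simple_pow, one_mul, mul_one, inv_one, Equiv.Perm.one_apply]
  rw [CharTwo.add_self_eq_zero, add_zero]

noncomputable def reflRep : W →* Equiv.Perm (W × ZMod 2) :=
  cs.lift ⟨simplePerm cs, isLiftable_simplePerm cs⟩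

theorem reflRep_wordProd_apply (ω : List B) (t : W) (e : ZMod 2) :
    cs.reflRep (π ω) (t, e) = (π ω * t * (π ω)⁻¹, e + (ris ω).count t) := by
  induction ω generalizing e with
  | nil => simp
  | cons i ω ih =>
    rw [wordProd_cons, map_mul, Equiv.Perm.mul_apply, ih, reflRep, lift_apply_simple,
      simplePerm_apply, mul_mul_inv_eq_iff, rightInvSeq, List.count_cons]
    ext
    · simp only [mul_inv_rev, inv_simple]
      group
    · simp only [beq_iff_eq, eq_comm (b := t)]
      push_cast
      ring

theorem reflRep_apply (w t : W) (e : ZMod 2) :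
    cs.reflRep w (t, e) = (w * t * w⁻¹, e + (cs.reflRep w (t, 0)).2) := by
  obtain ⟨ω, rfl⟩ := cs.wordProd_surjective w
  simp [reflRep_wordProd_apply]

theorem reflRep_apply_self {t : W} (ht : cs.IsReflection t) (e : ZMod 2) :
    cs.reflRep t (t, e) = (t, e + 1) := by
  obtain ⟨p, i, rfl⟩ := ht
  have hconj : p⁻¹ * (p * s i * p⁻¹) * p⁻¹⁻¹ = s i := by group
  have hp : ∀ x, cs.reflRep p (s i, x) = (p * s i * p⁻¹, x + (cs.reflRep p (s i, 0)).2) :=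
    cs.reflRep_apply p (s i)
  have hpinv := cs.reflRep_apply p⁻¹ (p * s i * p⁻¹) e
  rw [hconj] at hpinv
  have hround : cs.reflRep p (cs.reflRep p⁻¹ (p * s i * p⁻¹, e)) = (p * s i * p⁻¹, e) := by
    rw [← Equiv.Perm.mul_apply, ← map_mul, mul_inv_cancel, map_one, Equiv.Perm.one_apply]
  rw [hpinv, hp, Prod.mk.injEq] at hround
  rw [map_mul, map_mul, Equiv.Perm.mul_apply, Equiv.Perm.mul_apply, hpinv, reflRep,
    lift_apply_simple, simplePerm_apply, if_pos rfl, ← reflRep, simple_mul_simple_cancel_right,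
    hp]
  exact Prod.ext rfl (by linear_combination hround.2)

theorem count_rightInvSeq_of_wordProd_eq_mul {ω ω' : List B} {t : W} (ht : cs.IsReflection t)
    (h : π ω' = π ω * t) : ((ris ω').count t : ZMod 2) = (ris ω).count t + 1 := by
  have := congrArg Prod.snd (congrArg (cs.reflRep · (t, 0)) h)
  simp only [map_mul, Equiv.Perm.mul_apply, reflRep_apply_self cs ht, reflRep_wordProd_apply,
    zero_add] at this
  rw [this, add_comm]

/-- The strong exchange property: by `wordProd_mul_getD_rightInvSeq`, `π ω * t` is then the
product of `ω` with one letter deleted. -/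
theorem mem_rightInvSeq_of_isRightInversion {ω : List B} {t : W}
    (h : cs.IsRightInversion (π ω) t) : t ∈ ris ω := by
  by_contra hω
  obtain ⟨τ, hτ, hτω⟩ := cs.exists_isReduced (π ω * t)
  have hcount := cs.count_rightInvSeq_of_wordProd_eq_mul h.1 hτω.symm
  rw [List.count_eq_zero.mpr hω, Nat.cast_zero, zero_add] at hcount
  have hτt : t ∈ ris τ :=
    List.count_pos_iff.mp (Nat.pos_of_ne_zero fun h0 => by simp [h0] at hcount)
  have := (cs.isRightInversion_of_mem_rightInvSeq hτ hτt).2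
  rw [← hτω, mul_assoc, h.1.mul_self, mul_one] at this
  exact lt_asymm h.2 this

end ReflectionRepresentation

section Bruhat

def BruhatStep (v w : W) : Prop := ∃ t, cs.IsReflection t ∧ w = v * t ∧ ℓ v < ℓ w

theorem bruhatLE_iff_reflTransGen {v w : W} :
    bruhatLE cs v w ↔ Relation.ReflTransGen cs.BruhatStep v w := by
  constructor
  · rintro ⟨l, hrefl, hprod, hlen⟩
    induction l generalizing v with
    | nil => exact hprod ▸ Relation.ReflTransGen.refl
    | cons t l ih =>
      refine .head ⟨t, hrefl t mem_cons_self, rfl, by simpa using hlen 0⟩ ?_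
      refine ih (fun t' ht' => hrefl t' (mem_cons_of_mem t ht')) hprod fun k hk => ?_
      simpa using hlen (k + 1) (by simpa using hk)
  · intro h
    induction h using Relation.ReflTransGen.head_induction_on with
    | refl => exact ⟨[], by simp, rfl, by simp⟩
    | head hstep _ ih =>
      obtain ⟨t, ht, rfl, hlt⟩ := hstep
      obtain ⟨l, hrefl, hprod, hlen⟩ := ih
      refine ⟨t :: l, ?_, hprod, fun k hk => ?_⟩
      · simpa [ht] using hrefl
      · cases k with
        | zero => simpa using hlt
        | succ k => simpa using hlen k (by simpa using hk)

theorem bruhatLE_refl (v : W) : bruhatLE cs v v :=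
  (cs.bruhatLE_iff_reflTransGen).mpr Relation.ReflTransGen.refl

theorem bruhatLE_trans {u v w : W} (huv : bruhatLE cs u v) (hvw : bruhatLE cs v w) :
    bruhatLE cs u w := by
  rw [bruhatLE_iff_reflTransGen] at *
  exact huv.trans hvw

theorem bruhatLE_of_bruhatStep {v w : W} (h : cs.BruhatStep v w) : bruhatLE cs v w :=
  (cs.bruhatLE_iff_reflTransGen).mpr (Relation.ReflTransGen.single h)

theorem bruhatStep_mul_simple {w : W} {i : B} (h : cs.IsRightDescent w i) :
    cs.BruhatStep (w * s i) w :=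
  ⟨s i, cs.isReflection_simple i, (simple_mul_simple_cancel_right cs i).symm, h⟩

theorem bruhatStep_self_mul_simple {w : W} {i : B} (h : ¬cs.IsRightDescent w i) :
    cs.BruhatStep w (w * s i) := by
  rw [isRightDescent_iff_not_isRightDescent_mul, not_not] at h
  simpa [simple_mul_simple_cancel_right] using cs.bruhatStep_mul_simple h

theorem bruhatStep_simple_mul {w : W} {i : B} (h : cs.IsLeftDescent w i) :
    cs.BruhatStep (s i * w) w := by
  refine ⟨w⁻¹ * s i * w, ?_, by simp [mul_assoc, simple_mul_simple_cancel_left], h⟩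
  simpa using (cs.isReflection_simple i).conj w⁻¹

/-- If `ℓ (w * s i) < ℓ w`, strong exchange in a reduced word for `w` ending with `i` puts
`s i * t * s i` in the inversion sequence of `w * s i`. -/
theorem eq_or_bruhatStep_mul_simple {v w : W} (h : cs.BruhatStep v w) (i : B) :
    v * s i = w ∨ cs.BruhatStep (v * s i) (w * s i) := by
  obtain ⟨t, ht, rfl, hlt⟩ := h
  by_cases hts : t = s i
  · exact Or.inl (by rw [hts])
  right
  have ht' : cs.IsReflection (s i * t * s i) := by simpa using ht.conj (s i)
  refine ⟨s i * t * s i, ht', by simp [mul_assoc, simple_mul_simple_cancel_left], ?_⟩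
  rcases cs.length_mul_simple (v * t) i with hup | hdown
  · have := cs.length_mul_le v (s i)
    rw [length_simple] at this
    omega
  · obtain ⟨ξ, hξ, hξw⟩ := cs.exists_isReduced (v * t * s i)
    have hξi : π (ξ.concat i) = v * t := by
      rw [wordProd_concat, ← hξw, simple_mul_simple_cancel_right]
    have hred : cs.IsReduced (ξ.concat i) := by
      rw [IsReduced, hξi, length_concat, ← hξ.eq, ← hξw]
      omega
    have hmem := cs.mem_rightInvSeq_of_isRightInversion
      (ω := ξ.concat i) ⟨ht, by rwa [hξi, mul_assoc, ht.mul_self, mul_one]⟩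
    rw [rightInvSeq_concat, concat_eq_append, mem_append, mem_singleton] at hmem
    obtain ⟨u, hu, rfl⟩ := List.mem_map.mp (hmem.resolve_right hts)
    have := (cs.isRightInversion_of_mem_rightInvSeq hξ hu).2
    rw [← hξw] at this
    simpa [mul_assoc, simple_mul_simple_cancel_left,
      (cs.isReflection_of_mem_rightInvSeq ξ hu).mul_self] using this

theorem mul_simple_bruhatLE_or {v w : W} (h : bruhatLE cs v w) (i : B) :
    bruhatLE cs (v * s i) w ∨ bruhatLE cs (v * s i) (w * s i) := by
  simp only [bruhatLE_iff_reflTransGen] at *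
  induction h using Relation.ReflTransGen.head_induction_on with
  | refl => exact Or.inr Relation.ReflTransGen.refl
  | head hstep hyw ih =>
    rcases cs.eq_or_bruhatStep_mul_simple hstep i with heq | hstep'
    · exact Or.inl (heq ▸ hyw)
    · exact ih.imp (Relation.ReflTransGen.head hstep') (Relation.ReflTransGen.head hstep')

theorem mul_simple_bruhatLE_of_isRightDescent {v w : W} {i : B} (h : bruhatLE cs v w)
    (hw : cs.IsRightDescent w i) : bruhatLE cs (v * s i) w :=
  (cs.mul_simple_bruhatLE_or h i).elim id fun h' =>
    cs.bruhatLE_trans h' (cs.bruhatLE_of_bruhatStep (cs.bruhatStep_mul_simple hw))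

theorem bruhatLE_mul_simple_of_not_isRightDescent {v w : W} {i : B} (h : bruhatLE cs v w)
    (hw : cs.IsRightDescent w i) (hv : ¬cs.IsRightDescent v i) : bruhatLE cs v (w * s i) := by
  rw [bruhatLE_iff_reflTransGen] at *
  induction h with
  | refl => exact absurd hw hv
  | @tail y z hvy hyz ih =>
    rcases cs.eq_or_bruhatStep_mul_simple hyz i with heq | hstep
    · rwa [← heq, simple_mul_simple_cancel_right]
    · by_cases hy : cs.IsRightDescent y i
      · exact (ih hy).tail hstep
      · exact (hvy.tail (cs.bruhatStep_self_mul_simple hy)).tail hstep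

theorem mul_simple_bruhatLE_mul_simple {v w : W} {i : B} (h : bruhatLE cs v w)
    (hw : cs.IsRightDescent w i) (hv : cs.IsRightDescent v i) :
    bruhatLE cs (v * s i) (w * s i) := by
  refine cs.bruhatLE_mul_simple_of_not_isRightDescent
    (cs.bruhatLE_trans (cs.bruhatLE_of_bruhatStep (cs.bruhatStep_mul_simple hv)) h) hw ?_
  rwa [← isRightDescent_iff_not_isRightDescent_mul]

theorem bruhatLE_inv {v w : W} (h : bruhatLE cs v w) : bruhatLE cs v⁻¹ w⁻¹ := by
  rw [bruhatLE_iff_reflTransGen] at *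
  induction h with
  | refl => exact Relation.ReflTransGen.refl
  | @tail y _ _ hstep ih =>
    obtain ⟨t, ht, rfl, hlt⟩ := hstep
    refine ih.tail ⟨y * t * y⁻¹, ht.conj y, ?_, by simpa only [length_inv] using hlt⟩
    rw [mul_inv_rev, ht.inv]
    group

theorem simple_mul_bruhatLE_of_isLeftDescent {v w : W} {i : B} (h : bruhatLE cs v w)
    (hw : cs.IsLeftDescent w i) : bruhatLE cs (s i * v) w := by
  simpa using cs.bruhatLE_inv (cs.mul_simple_bruhatLE_of_isRightDescent (cs.bruhatLE_inv h)
    (cs.isRightDescent_inv_iff.mpr hw))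

theorem bruhatLE_simple_mul_of_not_isLeftDescent {v w : W} {i : B} (h : bruhatLE cs v w)
    (hw : cs.IsLeftDescent w i) (hv : ¬cs.IsLeftDescent v i) : bruhatLE cs v (s i * w) := by
  simpa using cs.bruhatLE_inv (cs.bruhatLE_mul_simple_of_not_isRightDescent (cs.bruhatLE_inv h)
    (cs.isRightDescent_inv_iff.mpr hw) (cs.isRightDescent_inv_iff.not.mpr hv))

theorem simple_mul_bruhatLE_simple_mul {v w : W} {i : B} (h : bruhatLE cs v w)
    (hw : cs.IsLeftDescent w i) (hv : cs.IsLeftDescent v i) :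
    bruhatLE cs (s i * v) (s i * w) := by
  simpa using cs.bruhatLE_inv (cs.mul_simple_bruhatLE_mul_simple (cs.bruhatLE_inv h)
    (cs.isRightDescent_inv_iff.mpr hw) (cs.isRightDescent_inv_iff.mpr hv))

end Bruhat

section TwistedInvolution

variable (θ : W ≃* W)

theorem length_apply_of_preservesSimples (hinv : ∀ w : W, θ (θ w) = w)
    (hS : PreservesSimples cs θ) (u : W) : ℓ (θ u) = ℓ u := by
  choose σ hσ using hS
  have hle : ∀ u, ℓ (θ u) ≤ ℓ u := fun u => by
    obtain ⟨ω, hω, rfl⟩ := cs.exists_isReduced u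
    have : θ (π ω) = π (ω.map σ) := by
      simp only [wordProd, map_list_prod, List.map_map, Function.comp_def, hσ]
    rw [this, hω.eq, ← List.length_map σ]
    exact cs.length_wordProd_le _
  exact le_antisymm (hle u) (by simpa [hinv] using hle (θ u))

theorem isLeftDescent_iff_isRightDescent_of_apply_eq_inv (hθ : ∀ u, ℓ (θ u) = ℓ u)
    {i j : B} (hj : θ (s i) = s j) {u : W} (hu : θ u = u⁻¹) :
    cs.IsLeftDescent u j ↔ cs.IsRightDescent u i := by
  have : s j * u = θ ((u * s i)⁻¹) := by
    rw [mul_inv_rev, inv_simple, map_mul, map_inv, hu, inv_inv, hj]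
  rw [IsLeftDescent, IsRightDescent, this, hθ, length_inv]

theorem twMul_eq_of_isLeftDescent {i j : B} (hj : θ (s i) = s j) {u : W}
    (hu : cs.IsLeftDescent u j) :
    (s j * (u * s i) = u ∧ twMul cs θ u i = u * s i) ∨
      (cs.IsLeftDescent (u * s i) j ∧ twMul cs θ u i = s j * (u * s i)) := by
  rw [twMul, hj, ← mul_assoc]
  split_ifs with hfix
  · exact Or.inl ⟨hfix, rfl⟩
  · obtain ⟨-, -, -, hlt⟩ :=
      (cs.eq_or_bruhatStep_mul_simple (cs.bruhatStep_simple_mul hu) i).resolve_left hfix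
    exact Or.inr ⟨by rwa [IsLeftDescent, ← mul_assoc], rfl⟩

end TwistedInvolution

end CoxeterSystem

/-- Lifting property for twisted involutions (Lemma 3.6). -/
theorem stmt_7 {B W : Type*} [Group W] {M : CoxeterMatrix B}
    (cs : CoxeterSystem M W) (θ : W ≃* W)
    (hinv : ∀ w : W, θ (θ w) = w) (hS : PreservesSimples cs θ)
    (v w : W) (hv : θ v = v⁻¹) (hw : θ w = w⁻¹)
    (hvw : bruhatLE cs v w) (i : B) (hd : cs.IsRightDescent w i) :
    bruhatLE cs (twMul cs θ v i) w ∧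
      (cs.IsRightDescent v i → bruhatLE cs (twMul cs θ v i) (twMul cs θ w i)) := by
  obtain ⟨j, hj⟩ := hS i
  have hθ := cs.length_apply_of_preservesSimples θ hinv hS
  have hwj : cs.IsLeftDescent w j :=
    (cs.isLeftDescent_iff_isRightDescent_of_apply_eq_inv θ hθ hj hw).mpr hd
  refine ⟨?_, fun hvi => ?_⟩
  · have hvs := cs.mul_simple_bruhatLE_of_isRightDescent hvw hd
    rw [twMul]
    split_ifs
    · exact hvs
    · rw [hj, mul_assoc]
      exact cs.simple_mul_bruhatLE_of_isLeftDescent hvs hwj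
  have hvj := (cs.isLeftDescent_iff_isRightDescent_of_apply_eq_inv θ hθ hj hv).mpr hvi
  have hvs := cs.mul_simple_bruhatLE_mul_simple hvw hd hvi
  rcases cs.twMul_eq_of_isLeftDescent θ hj hvj with ⟨hvfix, hveq⟩ | ⟨hvsj, hveq⟩ <;>
    rcases cs.twMul_eq_of_isLeftDescent θ hj hwj with ⟨-, hweq⟩ | ⟨hwsj, hweq⟩ <;>
    rw [hveq, hweq]
  · exact hvs
  · refine cs.bruhatLE_simple_mul_of_not_isLeftDescent hvs hwsj ?_
    rw [CoxeterSystem.IsLeftDescent, hvfix]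
    exact not_lt.mpr hvi.le
  · exact cs.bruhatLE_trans (cs.bruhatLE_of_bruhatStep (cs.bruhatStep_simple_mul hvsj)) hvs
  · exact cs.simple_mul_bruhatLE_simple_mul hvs hwsj hvsj
end

section
/- For W × W with the swap automorphism θ, the Bruhat order on I(θ) = {(w,w⁻¹) : w ∈ W} is isomorphic, via w ↦ (w,w⁻¹), to the Bruhat order on W. -/
def bruhatStep {B W : Type*} [Group W] {M : CoxeterMatrix B} (cs : CoxeterSystem M W)
    (v w : W) : Prop :=
  ∃ t, cs.IsReflection t ∧ v * t = w ∧ cs.length v < cs.length w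

theorem bruhatLE_iff_reflTransGen {B W : Type*} [Group W] {M : CoxeterMatrix B}
    (cs : CoxeterSystem M W) {v w : W} :
    bruhatLE cs v w ↔ Relation.ReflTransGen (bruhatStep cs) v w := by
  constructor
  · rintro ⟨l, hrefl, rfl, hlen⟩
    induction l generalizing v with
    | nil => exact .refl
    | cons t l ih =>
      refine .head ⟨t, hrefl t List.mem_cons_self, rfl, by simpa using hlen 0 (by simp)⟩ ?_
      exact ih (fun x hx => hrefl x (List.mem_cons_of_mem t hx))
        fun k hk => by simpa [List.take_succ_cons] using hlen (k + 1) (by simpa using hk)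
  · intro h
    induction h using Relation.ReflTransGen.head_induction_on with
    | refl => exact ⟨[], by simp, rfl, by simp⟩
    | head hstep _ ih =>
      obtain ⟨t, ht, rfl, hlt⟩ := hstep
      obtain ⟨l, hrefl, hprod, hlen⟩ := ih
      refine ⟨t :: l, List.forall_mem_cons.mpr ⟨ht, hrefl⟩, by simpa using hprod, ?_⟩
      rintro (_ | k) hk
      · simpa using hlt
      · simpa [List.take_succ_cons] using hlen k (by simpa using hk)

theorem bijOn_mk_inv (G : Type*) [Group G] :
    Set.BijOn (fun g : G => ((g, g⁻¹) : G × G)) Set.univ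
      {x : G × G | (MulEquiv.prodComm : G × G ≃* G × G) x = x⁻¹} := by
  refine ⟨fun g _ => by simp, fun g _ g' _ h => congrArg Prod.fst h, ?_⟩
  rintro ⟨a, b⟩ hx
  simp only [Set.mem_ofPred_eq, MulEquiv.coe_prodComm, Prod.swap_prod_mk, Prod.inv_mk,
    Prod.mk.injEq] at hx
  exact ⟨a, Set.mem_univ a, by simp [hx.1]⟩

section Product

variable {B W : Type*} [Group W] {M : CoxeterMatrix B} (cs : CoxeterSystem M W)
  {M2 : CoxeterMatrix (B ⊕ B)} (cs2 : CoxeterSystem M2 (W × W))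

theorem wordProd_prod (hl : ∀ i : B, cs2.simple (Sum.inl i) = (cs.simple i, 1))
    (hr : ∀ i : B, cs2.simple (Sum.inr i) = (1, cs.simple i)) (l : List (B ⊕ B)) :
    cs2.wordProd l =
      (cs.wordProd (l.filterMap Sum.getLeft?), cs.wordProd (l.filterMap Sum.getRight?)) := by
  induction l with
  | nil => rfl
  | cons x l ih =>
    cases x with
    | inl i => simp [CoxeterSystem.wordProd_cons, List.filterMap_cons, ih, hl i]
    | inr i => simp [CoxeterSystem.wordProd_cons, List.filterMap_cons, ih, hr i]

theorem wordProd_map_inl (hl : ∀ i : B, cs2.simple (Sum.inl i) = (cs.simple i, 1))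
    (ω : List B) : cs2.wordProd (ω.map Sum.inl) = (cs.wordProd ω, 1) := by
  induction ω with
  | nil => rfl
  | cons i ω ih => simp [CoxeterSystem.wordProd_cons, ih, hl i]

theorem wordProd_map_inr (hr : ∀ i : B, cs2.simple (Sum.inr i) = (1, cs.simple i))
    (ω : List B) : cs2.wordProd (ω.map Sum.inr) = (1, cs.wordProd ω) := by
  induction ω with
  | nil => rfl
  | cons i ω ih => simp [CoxeterSystem.wordProd_cons, ih, hr i]

theorem length_filterMap_getLeft?_add_getRight? {α β : Type*} (l : List (α ⊕ β)) :
    (l.filterMap Sum.getLeft?).length + (l.filterMap Sum.getRight?).length = l.length := by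
  induction l with
  | nil => rfl
  | cons x l ih => cases x <;> simp [List.filterMap_cons] <;> omega

theorem length_prod (hl : ∀ i : B, cs2.simple (Sum.inl i) = (cs.simple i, 1))
    (hr : ∀ i : B, cs2.simple (Sum.inr i) = (1, cs.simple i)) (a b : W) :
    cs2.length (a, b) = cs.length a + cs.length b := by
  apply le_antisymm
  · obtain ⟨ω₁, hω₁, rfl⟩ := cs.exists_isReduced a
    obtain ⟨ω₂, hω₂, rfl⟩ := cs.exists_isReduced b
    have hsplit : ((cs.wordProd ω₁, cs.wordProd ω₂) : W × W) =
        cs2.wordProd (ω₁.map Sum.inl ++ ω₂.map Sum.inr) := by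
      simp [CoxeterSystem.wordProd_append, wordProd_map_inl cs cs2 hl,
        wordProd_map_inr cs cs2 hr]
    rw [hsplit, hω₁.eq, hω₂.eq]
    exact (cs2.length_wordProd_le _).trans (by simp)
  · obtain ⟨l, hred, hab⟩ := cs2.exists_isReduced (a, b)
    rw [hab, hred.eq, ← length_filterMap_getLeft?_add_getRight? l]
    rw [wordProd_prod cs cs2 hl hr, Prod.mk.injEq] at hab
    rw [hab.1, hab.2]
    exact add_le_add (cs.length_wordProd_le _) (cs.length_wordProd_le _)

theorem isReflection_prod_iff (hl : ∀ i : B, cs2.simple (Sum.inl i) = (cs.simple i, 1))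
    (hr : ∀ i : B, cs2.simple (Sum.inr i) = (1, cs.simple i)) (x : W × W) :
    cs2.IsReflection x ↔
      (∃ t, cs.IsReflection t ∧ x = (t, 1)) ∨ ∃ t, cs.IsReflection t ∧ x = (1, t) := by
  constructor
  · rintro ⟨⟨w₁, w₂⟩, i | i, rfl⟩
    · exact .inl ⟨_, ⟨w₁, i, rfl⟩, by rw [hl i]; ext <;> simp⟩
    · exact .inr ⟨_, ⟨w₂, i, rfl⟩, by rw [hr i]; ext <;> simp⟩
  · rintro (⟨_, ⟨w, i, rfl⟩, rfl⟩ | ⟨_, ⟨w, i, rfl⟩, rfl⟩)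
    · exact ⟨(w, 1), Sum.inl i, by rw [hl i]; ext <;> simp⟩
    · exact ⟨(1, w), Sum.inr i, by rw [hr i]; ext <;> simp⟩

theorem reflTransGen_bruhatStep_fst (hl : ∀ i : B, cs2.simple (Sum.inl i) = (cs.simple i, 1))
    (hr : ∀ i : B, cs2.simple (Sum.inr i) = (1, cs.simple i)) {x y : W × W}
    (h : bruhatStep cs2 x y) : Relation.ReflTransGen (bruhatStep cs) x.1 y.1 := by
  obtain ⟨r, hrefl, rfl, hlt⟩ := h
  rw [length_prod cs cs2 hl hr, length_prod cs cs2 hl hr] at hlt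
  rcases (isReflection_prod_iff cs cs2 hl hr r).mp hrefl with ⟨t, ht, rfl⟩ | ⟨t, -, rfl⟩
  · exact .single ⟨t, ht, rfl, by simpa using hlt⟩
  · simpa using Relation.ReflTransGen.refl

theorem reflTransGen_bruhatStep_mk_inv (hl : ∀ i : B, cs2.simple (Sum.inl i) = (cs.simple i, 1))
    (hr : ∀ i : B, cs2.simple (Sum.inr i) = (1, cs.simple i)) {u v : W}
    (h : bruhatStep cs u v) : Relation.ReflTransGen (bruhatStep cs2) (u, u⁻¹) (v, v⁻¹) := by
  obtain ⟨t, ht, rfl, hlt⟩ := h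
  have hinv : (u * t)⁻¹ = u⁻¹ * (u * t * u⁻¹) := by simp [mul_assoc, ht.inv]
  refine .head (b := (u * t, u⁻¹)) ⟨(t, 1), ?_, by simp, ?_⟩
    (.single ⟨(1, u * t * u⁻¹), ?_, ?_, ?_⟩)
  · exact (isReflection_prod_iff cs cs2 hl hr _).mpr (.inl ⟨t, ht, rfl⟩)
  · simp only [length_prod cs cs2 hl hr]; omega
  · exact (isReflection_prod_iff cs cs2 hl hr _).mpr (.inr ⟨_, ht.conj u, rfl⟩)
  · simp [hinv]
  · simp only [length_prod cs cs2 hl hr, cs.length_inv]; omega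

theorem bruhatLE_fst (hl : ∀ i : B, cs2.simple (Sum.inl i) = (cs.simple i, 1))
    (hr : ∀ i : B, cs2.simple (Sum.inr i) = (1, cs.simple i)) {x y : W × W}
    (h : bruhatLE cs2 x y) : bruhatLE cs x.1 y.1 :=
  (bruhatLE_iff_reflTransGen cs).mpr <| Relation.ReflTransGen.lift' Prod.fst
    (fun _ _ => reflTransGen_bruhatStep_fst cs cs2 hl hr) _ _
    ((bruhatLE_iff_reflTransGen cs2).mp h)

theorem bruhatLE_mk_inv (hl : ∀ i : B, cs2.simple (Sum.inl i) = (cs.simple i, 1))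
    (hr : ∀ i : B, cs2.simple (Sum.inr i) = (1, cs.simple i)) {u v : W}
    (h : bruhatLE cs u v) : bruhatLE cs2 (u, u⁻¹) (v, v⁻¹) :=
  (bruhatLE_iff_reflTransGen cs2).mpr <| Relation.ReflTransGen.lift' (fun w => (w, w⁻¹))
    (fun _ _ => reflTransGen_bruhatStep_mk_inv cs cs2 hl hr) _ _
    ((bruhatLE_iff_reflTransGen cs).mp h)

end Product

/-- Example 3.9: for `W × W` with the swap automorphism `θ`, the map
`w ↦ (w, w⁻¹)` is a bijection of `W` onto `I(θ)` which is an isomorphism from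
the Bruhat order on `W` to the Bruhat order on `I(θ)`. -/
theorem stmt_13 {B W : Type*} [Group W] {M : CoxeterMatrix B}
    (cs : CoxeterSystem M W)
    {M2 : CoxeterMatrix (B ⊕ B)} (cs2 : CoxeterSystem M2 (W × W))
    (hl : ∀ i : B, cs2.simple (Sum.inl i) = (cs.simple i, 1))
    (hr : ∀ i : B, cs2.simple (Sum.inr i) = (1, cs.simple i)) :
    Set.BijOn (fun w : W => ((w, w⁻¹) : W × W)) Set.univ
      {x : W × W | (MulEquiv.prodComm : W × W ≃* W × W) x = x⁻¹} ∧
    ∀ u v : W, bruhatLE cs u v ↔ bruhatLE cs2 (u, u⁻¹) (v, v⁻¹) :=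
  ⟨bijOn_mk_inv W, fun _ _ => ⟨bruhatLE_mk_inv cs cs2 hl hr, bruhatLE_fst cs cs2 hl hr⟩⟩
end

section
/- For the swap automorphism θ on W × W (W a finite Coxeter group), the weak order Wk(θ) on I(θ) ≅ W corresponds, under the bijection w ↦ (w,w⁻¹), to the two-sided weak order on W: the transitive closure of the union of the left and right weak orders. In particular, (w,w⁻¹)·(s,e)̲ = (ws,(ws)⁻¹) ⪯ (w,w⁻¹) iff s ∈ D_R(w), and (w,w⁻¹)·(e,s)̲ = (sw,(sw)⁻¹) ⪯ (w,w⁻¹) iff s ∈ D_L(w). -/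
/-- The rank `ρ(w)`: the minimal length of an `S̲`-expression for `w`. -/
noncomputable def twRho {B W : Type*} [Group W] {M : CoxeterMatrix B}
    (cs : CoxeterSystem M W) (θ : W ≃* W) (w : W) : ℕ :=
  sInf {k : ℕ | ∃ l : List B, l.length = k ∧ twWord cs θ 1 l = w}

/-- The weak order on twisted involutions: `v ⪯ w` iff `w` is obtained from `v`
by applying symbols, each increasing `ρ` by one. -/
noncomputable def wkLE {B W : Type*} [Group W] {M : CoxeterMatrix B}
    (cs : CoxeterSystem M W) (θ : W ≃* W) (v w : W) : Prop :=
  ∃ l : List B, twWord cs θ v l = w ∧ twRho cs θ w = twRho cs θ v + l.length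

/-- `v` lies in the connected component `wC_J` of `w` in the graph on `I(θ)`
whose edges are given by the actions of `s̲`, `s ∈ J`. -/
def inComponent {B W : Type*} [Group W] {M : CoxeterMatrix B}
    (cs : CoxeterSystem M W) (θ : W ≃* W) (J : Set B) (w v : W) : Prop :=
  Relation.ReflTransGen (fun a b => ∃ i ∈ J, twMul cs θ a i = b) w v

/-!
On the diagonal `{(w, w⁻¹)}` the swap twist never fixes a point (`w * s ≠ w`), so every symbol
acts by twisted conjugation: `(s,e)̲` sends `w` to `w s` and `(e,s)̲` sends it to `s w`.
Hence `ρ(w, w⁻¹) = ℓ(w)` (a reduced word for `w` realises it, and every symbol changes `ℓ` by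
at most one), and `⪯` becomes reachability by words of left and right multiplications by simple
reflections, each raising `ℓ` by one. Such a word is a chain of one-sided weak order steps, and
conversely a step `a ≤_R b` is obtained by following a reduced word of `a⁻¹ b`.
-/

namespace CoxeterSystem

variable {B W : Type*} [Group W] {M : CoxeterMatrix B} (cs : CoxeterSystem M W)

def twoSidedAct (u : W) : B ⊕ B → W
  | Sum.inl i => u * cs.simple i
  | Sum.inr i => cs.simple i * u

def TwoSidedWeakLE (u v : W) : Prop :=
  ∃ l : List (B ⊕ B), l.foldl cs.twoSidedAct u = v ∧ cs.length v = cs.length u + l.length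

theorem twoSidedAct_twoSidedAct (u : W) (j : B ⊕ B) :
    cs.twoSidedAct (cs.twoSidedAct u j) j = u := by
  cases j <;> simp [twoSidedAct, mul_assoc]

theorem length_twoSidedAct (u : W) (j : B ⊕ B) :
    cs.length (cs.twoSidedAct u j) = cs.length u + 1 ∨
      cs.length (cs.twoSidedAct u j) + 1 = cs.length u := by
  cases j
  · exact cs.length_mul_simple u _
  · exact cs.length_simple_mul u _

theorem length_foldl_twoSidedAct_le (l : List (B ⊕ B)) (u : W) :
    cs.length (l.foldl cs.twoSidedAct u) ≤ cs.length u + l.length := by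
  induction l generalizing u with
  | nil => simp
  | cons j t ih =>
    have := ih (cs.twoSidedAct u j)
    have := cs.length_twoSidedAct u j
    simp only [List.foldl_cons, List.length_cons]
    omega

theorem foldl_twoSidedAct_map_inl (u : W) (ω : List B) :
    (ω.map Sum.inl).foldl cs.twoSidedAct u = u * cs.wordProd ω := by
  induction ω generalizing u with
  | nil => simp
  | cons i t ih => simp [ih, cs.wordProd_cons, twoSidedAct, mul_assoc]

theorem foldl_twoSidedAct_map_inr (u : W) (ω : List B) :
    (ω.map Sum.inr).foldl cs.twoSidedAct u = cs.wordProd ω.reverse * u := by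
  induction ω generalizing u with
  | nil => simp
  | cons i t ih => simp [ih, cs.wordProd_append, twoSidedAct, mul_assoc]

theorem twoSidedWeakLE_refl (u : W) : cs.TwoSidedWeakLE u u :=
  ⟨[], rfl, rfl⟩

variable {cs} in
theorem TwoSidedWeakLE.trans {u v w : W} (huv : cs.TwoSidedWeakLE u v)
    (hvw : cs.TwoSidedWeakLE v w) : cs.TwoSidedWeakLE u w := by
  obtain ⟨l₁, rfl, h₁⟩ := huv
  obtain ⟨l₂, rfl, h₂⟩ := hvw
  exact ⟨l₁ ++ l₂, List.foldl_append .., by simp only [List.length_append]; omega⟩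

theorem twoSidedWeakLE_of_length_eq_add_length_inv_mul {a b : W}
    (h : cs.length b = cs.length a + cs.length (a⁻¹ * b)) : cs.TwoSidedWeakLE a b := by
  obtain ⟨ω, hω, hπ⟩ := cs.exists_isReduced (a⁻¹ * b)
  refine ⟨ω.map Sum.inl, ?_, ?_⟩
  · rw [foldl_twoSidedAct_map_inl, ← hπ, mul_inv_cancel_left]
  · rwa [List.length_map, ← hω.eq, ← hπ]

theorem twoSidedWeakLE_of_length_eq_add_length_mul_inv {a b : W}
    (h : cs.length b = cs.length a + cs.length (b * a⁻¹)) : cs.TwoSidedWeakLE a b := by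
  obtain ⟨ω, hω, hπ⟩ := cs.exists_isReduced (b * a⁻¹)
  refine ⟨ω.reverse.map Sum.inr, ?_, ?_⟩
  · rw [foldl_twoSidedAct_map_inr, List.reverse_reverse, ← hπ, inv_mul_cancel_right]
  · rwa [List.length_map, List.length_reverse, ← hω.eq, ← hπ]

theorem twoSidedWeakLE_iff_reflTransGen (u v : W) :
    cs.TwoSidedWeakLE u v ↔
      Relation.ReflTransGen
        (fun a b : W => cs.length b = cs.length a + cs.length (a⁻¹ * b) ∨
          cs.length b = cs.length a + cs.length (b * a⁻¹)) u v := by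
  constructor
  · rintro ⟨l, rfl, hlen⟩
    induction l generalizing u with
    | nil => exact .refl
    | cons j t ih =>
      have hle := cs.length_foldl_twoSidedAct_le t (cs.twoSidedAct u j)
      have hj := cs.length_twoSidedAct u j
      simp only [List.foldl_cons, List.length_cons] at hlen hle ⊢
      have hup : cs.length (cs.twoSidedAct u j) = cs.length u + 1 := by omega
      refine .head ?_ (ih _ (by omega))
      cases j
      · exact .inl (by simpa [twoSidedAct] using hup)
      · exact .inr (by simpa [twoSidedAct] using hup)
  · intro h
    induction h with
    | refl => exact cs.twoSidedWeakLE_refl u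
    | tail _ hstep ih =>
      refine ih.trans ?_
      rcases hstep with h | h
      · exact cs.twoSidedWeakLE_of_length_eq_add_length_inv_mul h
      · exact cs.twoSidedWeakLE_of_length_eq_add_length_mul_inv h

theorem twoSidedWeakLE_twoSidedAct_iff (u : W) (j : B ⊕ B) :
    cs.TwoSidedWeakLE (cs.twoSidedAct u j) u ↔
      cs.length (cs.twoSidedAct u j) + 1 = cs.length u := by
  constructor
  · rintro ⟨l, hl, hlen⟩
    have hj := cs.length_twoSidedAct u j
    cases l with
    | nil => rw [List.foldl_nil] at hl; rw [hl] at hj; omega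
    | cons => rw [List.length_cons] at hlen; omega
  · intro h
    exact ⟨[j], cs.twoSidedAct_twoSidedAct u j, by simpa using h.symm⟩

section Swap

variable {M₂ : CoxeterMatrix (B ⊕ B)} (cs₂ : CoxeterSystem M₂ (W × W))

theorem twMul_prodComm_diag (hl : ∀ i : B, cs₂.simple (Sum.inl i) = (cs.simple i, 1))
    (hr : ∀ i : B, cs₂.simple (Sum.inr i) = (1, cs.simple i)) (w : W) (j : B ⊕ B) :
    twMul cs₂ MulEquiv.prodComm (w, w⁻¹) j =
      (cs.twoSidedAct w j, (cs.twoSidedAct w j)⁻¹) := by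
  cases j with
  | inl i =>
    rw [twMul, hl, MulEquiv.coe_prodComm, Prod.swap_prod_mk, if_neg]
    · simp [twoSidedAct, cs.inv_simple]
    · intro h
      have hfst : 1 * w * cs.simple i = w := congrArg Prod.fst h
      exact cs.length_mul_simple_ne w i (by rw [← one_mul (w * _), ← mul_assoc, hfst])
  | inr i =>
    rw [twMul, hr, MulEquiv.coe_prodComm, Prod.swap_prod_mk, if_neg]
    · simp [twoSidedAct, cs.inv_simple]
    · intro h
      have hfst : cs.simple i * w * 1 = w := congrArg Prod.fst h
      exact cs.length_simple_mul_ne w i (by rw [← mul_one (_ * w), hfst])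

theorem twWord_prodComm_diag (hl : ∀ i : B, cs₂.simple (Sum.inl i) = (cs.simple i, 1))
    (hr : ∀ i : B, cs₂.simple (Sum.inr i) = (1, cs.simple i)) (u : W) (l : List (B ⊕ B)) :
    twWord cs₂ MulEquiv.prodComm (u, u⁻¹) l =
      (l.foldl cs.twoSidedAct u, (l.foldl cs.twoSidedAct u)⁻¹) := by
  induction l generalizing u with
  | nil => rfl
  | cons j t ih =>
    exact (congrArg (List.foldl _ · t) (cs.twMul_prodComm_diag cs₂ hl hr u j)).trans (ih _)

theorem twRho_prodComm_diag (hl : ∀ i : B, cs₂.simple (Sum.inl i) = (cs.simple i, 1))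
    (hr : ∀ i : B, cs₂.simple (Sum.inr i) = (1, cs.simple i)) (u : W) :
    twRho cs₂ MulEquiv.prodComm (u, u⁻¹) = cs.length u := by
  have hword (l : List (B ⊕ B)) :
      twWord cs₂ MulEquiv.prodComm 1 l = (u, u⁻¹) ↔ l.foldl cs.twoSidedAct 1 = u := by
    rw [show (1 : W × W) = (1, (1 : W)⁻¹) by rw [inv_one]; rfl,
      cs.twWord_prodComm_diag cs₂ hl hr, Prod.mk.injEq]
    exact ⟨And.left, fun h => ⟨h, by rw [h]⟩⟩
  have hreduced : cs.length u ∈ {k | ∃ l : List (B ⊕ B),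
      l.length = k ∧ twWord cs₂ MulEquiv.prodComm 1 l = (u, u⁻¹)} := by
    obtain ⟨ω, hω, rfl⟩ := cs.exists_isReduced u
    refine ⟨ω.map Sum.inl, by rw [List.length_map, hω.eq], ?_⟩
    rw [hword, foldl_twoSidedAct_map_inl, one_mul]
  unfold twRho
  refine le_antisymm (Nat.sInf_le hreduced) ?_
  obtain ⟨l, hlen, hprod⟩ := Nat.sInf_mem ⟨_, hreduced⟩
  simpa [← hlen, (hword l).mp hprod] using cs.length_foldl_twoSidedAct_le l 1

theorem wkLE_prodComm_diag_iff (hl : ∀ i : B, cs₂.simple (Sum.inl i) = (cs.simple i, 1))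
    (hr : ∀ i : B, cs₂.simple (Sum.inr i) = (1, cs.simple i)) (u v : W) :
    wkLE cs₂ MulEquiv.prodComm (u, u⁻¹) (v, v⁻¹) ↔ cs.TwoSidedWeakLE u v := by
  simp only [wkLE, TwoSidedWeakLE, cs.twWord_prodComm_diag cs₂ hl hr,
    cs.twRho_prodComm_diag cs₂ hl hr, Prod.mk.injEq, inv_inj, and_self]

end Swap

end CoxeterSystem

theorem stmt_19_general {B : Type*} {W : Type*} [Group W]
    {M : CoxeterMatrix B} (cs : CoxeterSystem M W)
    {M2 : CoxeterMatrix (B ⊕ B)} (cs2 : CoxeterSystem M2 (W × W))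
    (hl : ∀ i : B, cs2.simple (Sum.inl i) = (cs.simple i, 1))
    (hr : ∀ i : B, cs2.simple (Sum.inr i) = (1, cs.simple i)) :
    (∀ (w : W) (i : B),
      twMul cs2 (MulEquiv.prodComm : W × W ≃* W × W) (w, w⁻¹) (Sum.inl i) =
        (w * cs.simple i, (w * cs.simple i)⁻¹)) ∧
    (∀ (w : W) (i : B),
      twMul cs2 (MulEquiv.prodComm : W × W ≃* W × W) (w, w⁻¹) (Sum.inr i) =
        (cs.simple i * w, (cs.simple i * w)⁻¹)) ∧
    (∀ (w : W) (i : B),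
      wkLE cs2 (MulEquiv.prodComm : W × W ≃* W × W)
          (w * cs.simple i, (w * cs.simple i)⁻¹) (w, w⁻¹) ↔
        cs.IsRightDescent w i) ∧
    (∀ (w : W) (i : B),
      wkLE cs2 (MulEquiv.prodComm : W × W ≃* W × W)
          (cs.simple i * w, (cs.simple i * w)⁻¹) (w, w⁻¹) ↔
        cs.IsLeftDescent w i) ∧
    (∀ u v : W,
      wkLE cs2 (MulEquiv.prodComm : W × W ≃* W × W) (u, u⁻¹) (v, v⁻¹) ↔
        Relation.ReflTransGen
          (fun a b : W => cs.length b = cs.length a + cs.length (a⁻¹ * b) ∨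
            cs.length b = cs.length a + cs.length (b * a⁻¹)) u v) := by
  refine ⟨fun w i => cs.twMul_prodComm_diag cs2 hl hr w (.inl i),
    fun w i => cs.twMul_prodComm_diag cs2 hl hr w (.inr i), fun w i => ?_, fun w i => ?_,
    fun u v => (cs.wkLE_prodComm_diag_iff cs2 hl hr u v).trans
      (cs.twoSidedWeakLE_iff_reflTransGen u v)⟩
  · exact (cs.wkLE_prodComm_diag_iff cs2 hl hr _ w).trans
      ((cs.twoSidedWeakLE_twoSidedAct_iff w (.inl i)).trans cs.isRightDescent_iff.symm)
  · exact (cs.wkLE_prodComm_diag_iff cs2 hl hr _ w).trans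
      ((cs.twoSidedWeakLE_twoSidedAct_iff w (.inr i)).trans cs.isLeftDescent_iff.symm)

/-- Example 5.2: for `W × W` with the swap automorphism, the weak order on
`I(θ) ≅ W` corresponds, under `w ↦ (w, w⁻¹)`, to the two-sided weak order on
`W` (the transitive closure of the union of the left and right weak orders);
in particular `(w,w⁻¹)·(s,e)̲ = (ws,(ws)⁻¹) ⪯ (w,w⁻¹)` iff `s ∈ D_R(w)` and
`(w,w⁻¹)·(e,s)̲ = (sw,(sw)⁻¹) ⪯ (w,w⁻¹)` iff `s ∈ D_L(w)`. -/
theorem stmt_19 {B : Type*} [Finite B] {W : Type*} [Group W] [Finite W]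
    {M : CoxeterMatrix B} (cs : CoxeterSystem M W)
    {M2 : CoxeterMatrix (B ⊕ B)} (cs2 : CoxeterSystem M2 (W × W))
    (hl : ∀ i : B, cs2.simple (Sum.inl i) = (cs.simple i, 1))
    (hr : ∀ i : B, cs2.simple (Sum.inr i) = (1, cs.simple i)) :
    (∀ (w : W) (i : B),
      twMul cs2 (MulEquiv.prodComm : W × W ≃* W × W) (w, w⁻¹) (Sum.inl i) =
        (w * cs.simple i, (w * cs.simple i)⁻¹)) ∧
    (∀ (w : W) (i : B),
      twMul cs2 (MulEquiv.prodComm : W × W ≃* W × W) (w, w⁻¹) (Sum.inr i) =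
        (cs.simple i * w, (cs.simple i * w)⁻¹)) ∧
    (∀ (w : W) (i : B),
      wkLE cs2 (MulEquiv.prodComm : W × W ≃* W × W)
          (w * cs.simple i, (w * cs.simple i)⁻¹) (w, w⁻¹) ↔
        cs.IsRightDescent w i) ∧
    (∀ (w : W) (i : B),
      wkLE cs2 (MulEquiv.prodComm : W × W ≃* W × W)
          (cs.simple i * w, (cs.simple i * w)⁻¹) (w, w⁻¹) ↔
        cs.IsLeftDescent w i) ∧
    (∀ u v : W,
      wkLE cs2 (MulEquiv.prodComm : W × W ≃* W × W) (u, u⁻¹) (v, v⁻¹) ↔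
        Relation.ReflTransGen
          (fun a b : W => cs.length b = cs.length a + cs.length (a⁻¹ * b) ∨
            cs.length b = cs.length a + cs.length (b * a⁻¹)) u v) :=
  stmt_19_general cs cs2 hl hr
end
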